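/- arXiv:1807.01166 — 2 statements merged into one kernel-verified Lean document; each statement's English description precedes it below -/
import Mathlib

section
/- Let q ≥ 4 be a real number and let N, g be positive real numbers with g/N = 1/(√q - 1). Then (1 - 1/q)^N ≥ q^(-g). -/
theorem stmt_5 (q N g : ℝ) (hq : 4 ≤ q) (hN : 0 < N) (hg : 0 < g)
    (hgN : g / N = 1 / (Real.sqrt q - 1)) :
    (1 - 1 / q) ^ N ≥ q ^ (-g) := by
  have hq0 : (0:ℝ) < q := by linarith
  have hs : 2 ≤ Real.sqrt q := by
    have h4 : Real.sqrt 4 = 2 := by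
      rw [show (4:ℝ) = 2 ^ 2 by norm_num, Real.sqrt_sq (by norm_num)]
    have := Real.sqrt_le_sqrt hq
    linarith
  have hs1 : (0:ℝ) < Real.sqrt q - 1 := by linarith
  have hsq : Real.sqrt q * Real.sqrt q = q := Real.mul_self_sqrt hq0.le
  have hNval : g * (Real.sqrt q - 1) = N := by
    field_simp at hgN
    linarith
  have hlog : 1 ≤ Real.log q := by
    rw [Real.le_log_iff_exp_le hq0]
    calc Real.exp 1 ≤ 2.7182818286 := Real.exp_one_lt_d9.le
    _ ≤ q := by linarith
  -- Step 1: exp(-(2/q)) ≤ 1 - 1/q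
  have h1 : Real.exp (-(2/q)) ≤ 1 - 1/q := by
    have h2 : 2/q + 1 ≤ Real.exp (2/q) := Real.add_one_le_exp _
    have hp : (0:ℝ) < 2/q + 1 := by positivity
    have h3 : (Real.exp (2/q))⁻¹ ≤ (2/q + 1)⁻¹ := by
      apply inv_anti₀ hp h2
    have h4 : (2/q + 1)⁻¹ ≤ 1 - 1/q := by
      rw [inv_le_iff_one_le_mul₀ hp]
      have : (1 - 1/q) * (2/q + 1) - 1 = (q - 2) / q^2 := by
        field_simp
        ring
      nlinarith [div_nonneg (by linarith : (0:ℝ) ≤ q - 2) (by positivity : (0:ℝ) ≤ q^2)]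
    rw [Real.exp_neg]
    linarith
  have hb : (0:ℝ) ≤ Real.exp (-(2/q)) := (Real.exp_pos _).le
  have h5 : (Real.exp (-(2/q))) ^ N ≤ (1 - 1/q) ^ N :=
    Real.rpow_le_rpow hb h1 hN.le
  have h6 : (Real.exp (-(2/q))) ^ N = Real.exp (-(2/q) * N) := by
    rw [Real.rpow_def_of_pos (Real.exp_pos _), Real.log_exp]
  have h7 : q ^ (-g) = Real.exp (Real.log q * (-g)) := Real.rpow_def_of_pos hq0 _
  have h8 : Real.exp (Real.log q * (-g)) ≤ Real.exp (-(2/q) * N) := by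
    rw [Real.exp_le_exp]
    have k2 : 2 * N ≤ g * q := by
      nlinarith [hsq, hNval, mul_nonneg hg.le (sq_nonneg (Real.sqrt q - 1))]
    have k1 : g * q ≤ g * Real.log q * q := by
      nlinarith [mul_nonneg (mul_nonneg hg.le hq0.le) (sub_nonneg.mpr hlog)]
    rw [show Real.log q * -g = -(g * Real.log q) by ring,
      show -(2/q) * N = -(2 * N / q) by ring, neg_le_neg_iff, div_le_iff₀ hq0]
    linarith
  calc q ^ (-g) = Real.exp (Real.log q * (-g)) := h7
    _ ≤ Real.exp (-(2/q) * N) := h8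
    _ = (Real.exp (-(2/q))) ^ N := h6.symm
    _ ≤ (1 - 1/q) ^ N := h5
end

section
/- Let F be a field and let H_1, ..., H_n be ℓ × ℓ diagonal matrices over F such that for every subset S ⊆ [n] with |S| = r, and every diagonal index b, the r values {(H_i)_{bb} : i ∈ S} are pairwise distinct. Then for every S ⊆ [n] with |S| = r, the rℓ × rℓ block matrix whose (j, i) block (j ∈ [r], i ∈ S) is H_i^(j-1) is invertible. -/
namespace Matrix

theorem isUnit_blockDiagonal {m o R : Type*} [Fintype m] [DecidableEq m] [Fintype o]
    [DecidableEq o] [CommRing R] {M : o → Matrix m m R} (hM : ∀ k, IsUnit (M k)) :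
    IsUnit (blockDiagonal M) :=
  (Pi.isUnit_iff.mpr hM).map (blockDiagonalRingHom m o R)

theorem isUnit_vandermonde_of_injective {K : Type*} [Field K] {n : ℕ} {v : Fin n → K}
    (hv : Function.Injective v) : IsUnit (vandermonde v) := by
  rw [isUnit_iff_isUnit_det, isUnit_iff_ne_zero]
  exact det_vandermonde_ne_zero_iff.mpr hv

end Matrix

theorem stmt_15 (F : Type*) [Field F] (n r ℓ : ℕ)
    (d : Fin n → Fin ℓ → F)
    (hdist : ∀ S : Finset (Fin n), S.card = r → ∀ b : Fin ℓ,
      ∀ i ∈ S, ∀ i' ∈ S, d i b = d i' b → i = i') :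
    ∀ (S : Finset (Fin n)) (hS : S.card = r),
      IsUnit (Matrix.of fun p p' : Fin r × Fin ℓ =>
        if p.2 = p'.2 then (d (S.orderIsoOfFin hS p'.1 : Fin n) p.2) ^ (p.1 : ℕ) else 0) := by
  intro S hS
  set e := S.orderIsoOfFin hS
  have hblock : (Matrix.of fun p p' : Fin r × Fin ℓ =>
      if p.2 = p'.2 then (d (e p'.1 : Fin n) p.2) ^ (p.1 : ℕ) else 0) =
      Matrix.blockDiagonal fun b => (Matrix.vandermonde fun i => d (e i) b).transpose := rfl
  rw [hblock]
  refine Matrix.isUnit_blockDiagonal fun b =>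
    (Matrix.isUnit_transpose _).mpr (Matrix.isUnit_vandermonde_of_injective fun i i' h => ?_)
  exact e.injective (Subtype.ext (hdist S hS b _ (e i).2 _ (e i').2 h))
end
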